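/- In the Lie algebra gl₂(ℂ) of complex 2×2 matrices with the commutator bracket, let e = E₁₂, f = E₂₁, and h = (i/2)(E₁₁ − E₂₂) (Eᵢⱼ the elementary matrices). Then for every α ∈ ℂ, the bracket [e + α·h, f + conj(α)·h] lies in the ℂ-linear span of {e + α·h, f + conj(α)·h, 1₂} (1₂ the identity matrix) if and only if |α| = 1. (This is the computation in Step 1 of the proof of Theorem 6.1: under the identification of the degree-0 part of the complexified contact algebra of degree 1 with gl₂(ℂ), with z² ↦ e, z̄² ↦ f, z z̄ ↦ h and the grading element E ↦ a multiple of 1₂, the subspace ⟨E, z² + α z z̄, z̄² + ᾱ z z̄⟩ is a Lie subalgebra exactly when α = e^{iθ} is unimodular, in which case it is a Borel subalgebra.) -/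

import Mathlib

/-! With `x = e + α • h` and `y = f + β • h`, the relations `[e, f] = -2i h`, `[h, e] = i e`,
`[h, f] = -i f` give `[x, y] ≡ 2i (αβ - 1) h` modulo `span {x, y}`. But `h ∉ span {x, y, 1}`:
the off-diagonal entries force the coefficients of `x` and `y` to vanish, and `h` is not scalar.
So `[x, y] ∈ span {x, y, 1}` iff `αβ = 1`, which for `β = ᾱ` reads `|α| = 1`. -/

open Matrix

noncomputable section

/-- `e = E₁₂`. -/
def e : Matrix (Fin 2) (Fin 2) ℂ := Matrix.single 0 1 1

/-- `f = E₂₁`. -/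
def f : Matrix (Fin 2) (Fin 2) ℂ := Matrix.single 1 0 1

/-- `h = (i/2)(E₁₁ − E₂₂)`. -/
def h : Matrix (Fin 2) (Fin 2) ℂ :=
  (Complex.I / 2) • (Matrix.single 0 0 1 - Matrix.single 1 1 1)

theorem Submodule.smul_mem_iff_eq_zero_of_notMem {K V : Type*} [DivisionRing K] [AddCommGroup V]
    [Module K V] {p : Submodule K V} {v : V} (hv : v ∉ p) {c : K} : c • v ∈ p ↔ c = 0 := by
  refine ⟨fun hc => ?_, fun hc => by simp [hc]⟩
  by_contra hc0
  exact hv ((p.smul_mem_iff hc0).mp hc)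

theorem commutator_e_add_smul_h_f_add_smul_h (α β : ℂ) :
    (e + α • h) * (f + β • h) - (f + β • h) * (e + α • h) =
      (-Complex.I * β) • (e + α • h) + (-Complex.I * α) • (f + β • h)
        + (2 * Complex.I * (α * β - 1)) • h := by
  ext i j
  fin_cases i <;> fin_cases j <;>
    simp [e, f, h, Matrix.mul_apply, Fin.sum_univ_two, Matrix.single] <;> ring_nf <;>
    simp [Complex.I_sq]

theorem h_notMem_span (α β : ℂ) :
    h ∉ Submodule.span ℂ ({e + α • h, f + β • h, 1} : Set (Matrix (Fin 2) (Fin 2) ℂ)) := by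
  simp only [Submodule.mem_span_insert, Submodule.mem_span_singleton]
  rintro ⟨a, _, ⟨b, _, ⟨c, rfl⟩, rfl⟩, hh⟩
  have ha : a = 0 := by simpa [e, f, h, eq_comm] using congrFun₂ hh 0 1
  have hb : b = 0 := by simpa [e, f, h, eq_comm] using congrFun₂ hh 1 0
  subst ha hb
  have hdiag : h 0 0 = h 1 1 := by rw [hh]; simp
  have hI : Complex.I / 2 = -(Complex.I / 2) := by simpa [h] using hdiag
  exact Complex.I_ne_zero (by linear_combination hI)

theorem Complex.mul_conj_eq_one_iff (α : ℂ) : α * starRingEnd ℂ α = 1 ↔ ‖α‖ = 1 := by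
  rw [Complex.mul_conj', ← Complex.ofReal_pow, Complex.ofReal_eq_one,
    pow_eq_one_iff_of_nonneg (norm_nonneg α) two_ne_zero]

theorem borel_condition (α : ℂ) :
    ((e + α • h) * (f + (starRingEnd ℂ α) • h) - (f + (starRingEnd ℂ α) • h) * (e + α • h))
      ∈ Submodule.span ℂ
        ({e + α • h, f + (starRingEnd ℂ α) • h, (1 : Matrix (Fin 2) (Fin 2) ℂ)} :
          Set (Matrix (Fin 2) (Fin 2) ℂ))
    ↔ ‖α‖ = 1 := by
  set S := Submodule.span ℂ
    ({e + α • h, f + (starRingEnd ℂ α) • h, (1 : Matrix (Fin 2) (Fin 2) ℂ)} :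
      Set (Matrix (Fin 2) (Fin 2) ℂ))
  have hx : e + α • h ∈ S := Submodule.subset_span (by simp)
  have hy : f + starRingEnd ℂ α • h ∈ S := Submodule.subset_span (by simp)
  rw [commutator_e_add_smul_h_f_add_smul_h,
    S.add_mem_iff_right (add_mem (S.smul_mem _ hx) (S.smul_mem _ hy)),
    Submodule.smul_mem_iff_eq_zero_of_notMem (h_notMem_span _ _), ← Complex.mul_conj_eq_one_iff]
  simp [Complex.I_ne_zero, sub_eq_zero]
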